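/- arXiv:1507.02315 — 3 statements merged into one kernel-verified Lean document; each statement's English description precedes it below -/
import Mathlib

section
/- In the free group F(x,y), the word y²x²(y⁻¹x⁻¹)² is in the normal closure of the two words [y,x³] and (yx)²y⁻²x⁻². -/
/-! With `r₁ = [y, x³]` and `r₂ = (yx)² y⁻² x⁻²`, the word equals `(y r₁ y⁻¹) r₁ (x r₂⁻¹ x⁻¹)`:
the first two factors give `y² x³ y⁻² x⁻³`, and `x r₂⁻¹ x⁻¹ = x³ y² (x⁻¹ y⁻¹)² x⁻¹` cancels
its tail `y⁻² x⁻³`. -/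

theorem sq_mul_sq_mul_inv_mul_inv_sq_eq {G : Type*} [Group G] (x y : G) :
    y ^ 2 * x ^ 2 * (y⁻¹ * x⁻¹) ^ 2 =
      (y * (y * x ^ 3 * y⁻¹ * x⁻¹ ^ 3) * y⁻¹) * (y * x ^ 3 * y⁻¹ * x⁻¹ ^ 3) *
        (x * ((y * x) ^ 2 * y⁻¹ ^ 2 * x⁻¹ ^ 2)⁻¹ * x⁻¹) := by
  simp only [pow_succ, pow_zero, one_mul, mul_inv_rev, inv_inv]
  group

theorem Subgroup.Normal.sq_mul_sq_mul_inv_mul_inv_sq_mem {G : Type*} [Group G] {N : Subgroup G}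
    (hN : N.Normal) {x y : G} (h₁ : y * x ^ 3 * y⁻¹ * x⁻¹ ^ 3 ∈ N)
    (h₂ : (y * x) ^ 2 * y⁻¹ ^ 2 * x⁻¹ ^ 2 ∈ N) :
    y ^ 2 * x ^ 2 * (y⁻¹ * x⁻¹) ^ 2 ∈ N := by
  rw [sq_mul_sq_mul_inv_mul_inv_sq_eq]
  exact mul_mem (mul_mem (hN.conj_mem _ h₁ y) h₁) (hN.conj_mem _ (inv_mem h₂) x)

/-- In the free group `F(x,y)`, the word `y²x²(y⁻¹x⁻¹)²` lies in the normal closure of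
`[y,x³] = y x³ y⁻¹ x⁻³` and `(yx)² y⁻² x⁻²`. -/
theorem stmt_9 :
    let x : FreeGroup (Fin 2) := FreeGroup.of 0
    let y : FreeGroup (Fin 2) := FreeGroup.of 1
    y ^ 2 * x ^ 2 * (y⁻¹ * x⁻¹) ^ 2 ∈
      Subgroup.normalClosure {y * x ^ 3 * y⁻¹ * x⁻¹ ^ 3,
        (y * x) ^ 2 * y⁻¹ ^ 2 * x⁻¹ ^ 2} := by
  intro x y
  exact Subgroup.normalClosure_normal.sq_mul_sq_mul_inv_mul_inv_sq_mem
    (Subgroup.subset_normalClosure (Set.mem_insert _ _))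
    (Subgroup.subset_normalClosure (Set.mem_insert_of_mem _ rfl))
end

section
/- In the free group F(x,y), the word [y³,x] = y³xy⁻³x⁻¹ is in the normal closure of the two words [y,x³] and (yx)²y⁻²x⁻². -/
/-!
Write `X, Y` for the images of `x, y` in the quotient, so that `Y` commutes with `X³` and
`(YX)² = X²Y²`. Then `(YX)³ = YX·X²Y² = X³Y³`, and expanding `(YX)⁴` once as `((YX)²)²` and once
as `YX·(YX)³` yields `(XY)² = Y²X²`. Expanding `(XY)³` in the same two ways gives `XY³X² = Y³X³`,
that is, `Y³` commutes with `X`.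
-/

section

variable {G : Type*} [Group G] {x y : G}

theorem mul_pow_three_of_mul_sq (hc : Commute y (x ^ 3)) (hs : (y * x) ^ 2 = x ^ 2 * y ^ 2) :
    (y * x) ^ 3 = x ^ 3 * y ^ 3 :=
  calc (y * x) ^ 3 = y * x * (y * x) ^ 2 := pow_succ' _ _
    _ = y * x ^ 3 * y ^ 2 := by rw [hs]; group
    _ = x ^ 3 * y ^ 3 := by rw [hc.eq]; group

theorem mul_sq_swap_of_mul_sq (hc : Commute y (x ^ 3)) (hs : (y * x) ^ 2 = x ^ 2 * y ^ 2) :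
    (x * y) ^ 2 = y ^ 2 * x ^ 2 := by
  have key : x ^ 2 * (y ^ 2 * x ^ 2) * y ^ 2 = x ^ 2 * (x * y) ^ 2 * y ^ 2 :=
    calc x ^ 2 * (y ^ 2 * x ^ 2) * y ^ 2 = ((y * x) ^ 2) ^ 2 := by rw [hs, sq (x ^ 2 * y ^ 2)]; group
      _ = y * x * (y * x) ^ 3 := by group
      _ = y * x ^ 3 * (x * y ^ 3) := by rw [mul_pow_three_of_mul_sq hc hs]; group
      _ = x ^ 2 * (x * y) ^ 2 * y ^ 2 := by rw [hc.eq, sq (x * y)]; group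
  exact (mul_left_cancel (mul_right_cancel key)).symm

theorem commute_pow_three_of_mul_sq (hc : Commute y (x ^ 3)) (hs : (y * x) ^ 2 = x ^ 2 * y ^ 2) :
    Commute (y ^ 3) x := by
  have hs' := mul_sq_swap_of_mul_sq hc hs
  have key : y ^ 3 * x * x ^ 2 = x * y ^ 3 * x ^ 2 :=
    calc y ^ 3 * x * x ^ 2 = y ^ 2 * (y * x ^ 3) := by group
      _ = (x * y) ^ 2 * (x * y) := by rw [hc.eq, hs']; group
      _ = x * y * (x * y) ^ 2 := pow_mul_comm' _ _
      _ = x * y ^ 3 * x ^ 2 := by rw [hs']; group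
  exact mul_right_cancel key

end

/-- In the free group `F(x,y)`, the word `[y³,x] = y³ x y⁻³ x⁻¹` lies in the normal closure
of `[y,x³] = y x³ y⁻¹ x⁻³` and `(yx)² y⁻² x⁻²`. -/
theorem stmt_10 :
    let x : FreeGroup (Fin 2) := FreeGroup.of 0
    let y : FreeGroup (Fin 2) := FreeGroup.of 1
    y ^ 3 * x * y⁻¹ ^ 3 * x⁻¹ ∈
      Subgroup.normalClosure {y * x ^ 3 * y⁻¹ * x⁻¹ ^ 3,
        (y * x) ^ 2 * y⁻¹ ^ 2 * x⁻¹ ^ 2} := by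
  intro x y
  set N := Subgroup.normalClosure ({y * x ^ 3 * y⁻¹ * x⁻¹ ^ 3,
    (y * x) ^ 2 * y⁻¹ ^ 2 * x⁻¹ ^ 2} : Set (FreeGroup (Fin 2)))
  have trivial_of_mem {w} (hw : w ∈ N) : (w : FreeGroup (Fin 2) ⧸ N) = 1 :=
    (QuotientGroup.eq_one_iff w).2 hw
  have hc := trivial_of_mem (Subgroup.subset_normalClosure (Set.mem_insert _ _))
  have hs := trivial_of_mem (Subgroup.subset_normalClosure (Set.mem_insert_of_mem _ rfl))
  rw [← QuotientGroup.eq_one_iff]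
  simp only [QuotientGroup.mk_mul, QuotientGroup.mk_pow, QuotientGroup.mk_inv, inv_pow] at hc hs ⊢
  rw [← commutatorElement_def, commutatorElement_eq_one_iff_commute] at hc
  rw [mul_assoc, ← mul_inv_rev, mul_inv_eq_one] at hs
  rw [← commutatorElement_def, commutatorElement_eq_one_iff_commute]
  exact commute_pow_three_of_mul_sq hc hs
end

section
/- In the group H presented by ⟨x, y | x³ = 1, y³ = 1, (xy)³ = 1⟩, each of the four ribbon tromino boundary words [y,x³], (yx)²y⁻²x⁻², y²x²(y⁻¹x⁻¹)², and [y³,x] equals the identity. -/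
/-! Each boundary word becomes trivial in any group generated by `a, b` with
`a³ = b³ = (ab)³ = 1`: the first and last are commutators with a cube, and in the middle two
every square is an inverse (`g² = g⁻¹`, also for `g = ba`, a conjugate of `ab`), after which
the words cancel freely. Applying this in `F(x,y) ⧸ N` gives membership in `N`. -/

section CubeRelations

variable {G : Type*} [Group G] {a b : G}

lemma sq_eq_inv_of_pow_three_eq_one (h : a ^ 3 = 1) : a ^ 2 = a⁻¹ :=
  eq_inv_of_mul_eq_one_left (by rw [← pow_succ, h])

lemma pow_three_mul_comm (h : (a * b) ^ 3 = 1) : (b * a) ^ 3 = 1 := by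
  have hconj : b * a = b * (a * b) * b⁻¹ := by group
  rw [hconj, conj_pow, h, mul_one, mul_inv_cancel]

lemma tromino_boundary_words_eq_one (ha : a ^ 3 = 1) (hb : b ^ 3 = 1) (hab : (a * b) ^ 3 = 1) :
    b * a ^ 3 * b⁻¹ * a⁻¹ ^ 3 = 1 ∧
    (b * a) ^ 2 * b⁻¹ ^ 2 * a⁻¹ ^ 2 = 1 ∧
    b ^ 2 * a ^ 2 * (b⁻¹ * a⁻¹) ^ 2 = 1 ∧
    b ^ 3 * a * b⁻¹ ^ 3 * a⁻¹ = 1 := by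
  have ha' : a⁻¹ ^ 3 = 1 := by rw [inv_pow, ha, inv_one]
  have hb' : b⁻¹ ^ 3 = 1 := by rw [inv_pow, hb, inv_one]
  have hab' : (b⁻¹ * a⁻¹) ^ 3 = 1 := by rw [← mul_inv_rev, inv_pow, hab, inv_one]
  refine ⟨?_, ?_, ?_, ?_⟩
  · rw [ha, ha']
    group
  · rw [sq_eq_inv_of_pow_three_eq_one (pow_three_mul_comm hab),
      sq_eq_inv_of_pow_three_eq_one hb', sq_eq_inv_of_pow_three_eq_one ha']
    group
  · rw [sq_eq_inv_of_pow_three_eq_one hab', sq_eq_inv_of_pow_three_eq_one hb,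
      sq_eq_inv_of_pow_three_eq_one ha]
    group
  · rw [hb, hb']
    group

end CubeRelations

/-- In `H = ⟨x, y | x³, y³, (xy)³⟩`, the four ribbon tromino boundary words
`[y,x³]`, `(yx)²y⁻²x⁻²`, `y²x²(y⁻¹x⁻¹)²`, `[y³,x]` are all trivial; i.e. each lies in the
normal closure of `{x³, y³, (xy)³}` in the free group `F(x,y)`. -/
theorem stmt_11 :
    let x : FreeGroup (Fin 2) := FreeGroup.of 0
    let y : FreeGroup (Fin 2) := FreeGroup.of 1
    let N := Subgroup.normalClosure {x ^ 3, y ^ 3, (x * y) ^ 3}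
    y * x ^ 3 * y⁻¹ * x⁻¹ ^ 3 ∈ N ∧
    (y * x) ^ 2 * y⁻¹ ^ 2 * x⁻¹ ^ 2 ∈ N ∧
    y ^ 2 * x ^ 2 * (y⁻¹ * x⁻¹) ^ 2 ∈ N ∧
    y ^ 3 * x * y⁻¹ ^ 3 * x⁻¹ ∈ N := by
  intro x y N
  have relator_mk_eq_one {r} (hr : r ∈ ({x ^ 3, y ^ 3, (x * y) ^ 3} : Set _)) :
      QuotientGroup.mk' N r = 1 :=
    (QuotientGroup.eq_one_iff r).mpr (Subgroup.subset_normalClosure hr)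
  have hx := relator_mk_eq_one (r := x ^ 3) (by simp)
  have hy := relator_mk_eq_one (r := y ^ 3) (by simp)
  have hxy := relator_mk_eq_one (r := (x * y) ^ 3) (by simp)
  rw [map_pow] at hx hy hxy
  rw [map_mul] at hxy
  simp only [← QuotientGroup.ker_mk' N, MonoidHom.mem_ker, map_mul, map_pow, map_inv]
  exact tromino_boundary_words_eq_one hx hy hxy
end
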